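/- arXiv:2511.13034 — 2 statements merged into one kernel-verified Lean document; each statement's English description precedes it below -/
import Mathlib

section
/- Let P be an irreducible row-stochastic matrix on a nonempty finite type X with stationary distribution d, and let μ : X → ℝ be any probability vector (μ(x) ≥ 0, Σ_x μ(x) = 1). Then the Cesàro averages of the pushforwards of μ converge to d: for every y ∈ X, (1/t)·Σ_{n=0}^{t−1} (μ·Pⁿ)(y) → d(y) as t → ∞, where (μ·Pⁿ)(y) = Σ_x μ(x)·(Pⁿ)(x,y). -/
/-!
The Cesàro averages `vₜ = t⁻¹ ∑_{n<t} μ Pⁿ` telescope under `P`: `vₜ P - vₜ = t⁻¹ (μ Pᵗ - μ)`,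
which tends to `0`. Hence every cluster point of `(vₜ)` in the compact standard simplex is a
stationary distribution, and for an irreducible `P` the stationary distribution is unique, so
`vₜ → d`.
-/

open Finset Filter Topology

namespace Matrix

variable {X : Type*} [Fintype X] [DecidableEq X]

section Semiring

variable {R : Type*} [Semiring R] {P : Matrix X X R}

lemma vecMul_pow_eq_self {v : X → R} (hv : v ᵥ* P = v) (n : ℕ) : v ᵥ* (P ^ n) = v := by
  induction n with
  | zero => exact vecMul_one v
  | succ n ih => rw [pow_succ, ← vecMul_vecMul, ih, hv]

end Semiring

section OrderedSemiring

variable {R : Type*} [Semiring R] [PartialOrder R] [IsOrderedRing R] {P : Matrix X X R}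

lemma vecMul_mem_stdSimplex (hP : P ∈ rowStochastic R X) {μ : X → R}
    (hμ : μ ∈ stdSimplex R X) : μ ᵥ* P ∈ stdSimplex R X := by
  have h := vecMul_dotProduct_one_eq_one_rowStochastic hP (by rw [dotProduct_one]; exact hμ.2)
  exact ⟨nonneg_vecMul_of_mem_rowStochastic hP hμ.1, by rwa [dotProduct_one] at h⟩

end OrderedSemiring

section Field

variable {R : Type*} [Field R]

def cesaroAvg (μ : X → R) (P : Matrix X X R) (t : ℕ) : X → R :=
  (t : R)⁻¹ • ∑ n ∈ range t, μ ᵥ* (P ^ n)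

lemma cesaroAvg_apply (μ : X → R) (P : Matrix X X R) (t : ℕ) (y : X) :
    cesaroAvg μ P t y = 1 / (t : R) * ∑ n ∈ range t, ∑ x, μ x * (P ^ n) x y := by
  simp [cesaroAvg, Finset.sum_apply, vecMul, dotProduct]

lemma cesaroAvg_vecMul_sub (μ : X → R) (P : Matrix X X R) (t : ℕ) :
    cesaroAvg μ P t ᵥ* P - cesaroAvg μ P t = (t : R)⁻¹ • (μ ᵥ* (P ^ t) - μ) := by
  have htel := sum_range_sub (fun n => μ ᵥ* (P ^ n)) t
  simp only [pow_succ, ← vecMul_vecMul, pow_zero, vecMul_one] at htel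
  rw [cesaroAvg, smul_vecMul, sum_vecMul, ← smul_sub, ← sum_sub_distrib, htel]

end Field

section OrderedField

variable {R : Type*} [Field R] [LinearOrder R] [IsStrictOrderedRing R] {P : Matrix X X R}

lemma cesaroAvg_mem_stdSimplex (hP : P ∈ rowStochastic R X) {μ : X → R}
    (hμ : μ ∈ stdSimplex R X) {t : ℕ} (ht : t ≠ 0) : cesaroAvg μ P t ∈ stdSimplex R X := by
  rw [cesaroAvg, smul_sum]
  refine (convex_stdSimplex R X).sum_mem (fun _ _ => by positivity) ?_ fun n _ => ?_
  · simp [ht]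
  · exact vecMul_mem_stdSimplex (pow_mem hP n) hμ

lemma IsIrreducible.eq_zero_of_vecMul_eq_self (hP : P.IsIrreducible) {g : X → R}
    (hg0 : ∀ x, 0 ≤ g x) (hg : g ᵥ* P = g) {z : X} (hz : g z = 0) : g = 0 := by
  funext x
  obtain ⟨n, -, hn⟩ := (isIrreducible_iff_exists_pow_pos hP.nonneg).1 hP x z
  have hsum : ∑ y, g y * (P ^ n) y z = 0 := by
    rw [← hz, ← congrFun (vecMul_pow_eq_self hg n) z]
    rfl
  have hterm := (sum_eq_zero_iff_of_nonneg fun y _ =>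
    mul_nonneg (hg0 y) (pow_apply_nonneg hP.nonneg n y z)).1 hsum x (mem_univ x)
  exact (mul_eq_zero.1 hterm).resolve_right hn.ne'

lemma IsIrreducible.pos_of_mem_stdSimplex_of_vecMul_eq_self (hP : P.IsIrreducible)
    {d : X → R} (hd : d ∈ stdSimplex R X) (hdP : d ᵥ* P = d) (x : X) : 0 < d x := by
  refine (hd.1 x).lt_of_ne fun hx => ?_
  simpa [hP.eq_zero_of_vecMul_eq_self hd.1 hdP hx.symm] using hd.2

lemma IsIrreducible.eq_of_mem_stdSimplex_of_vecMul_eq_self (hP : P.IsIrreducible)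
    {v d : X → R} (hv : v ∈ stdSimplex R X) (hvP : v ᵥ* P = v)
    (hd : d ∈ stdSimplex R X) (hdP : d ᵥ* P = d) : v = d := by
  have hdpos := hP.pos_of_mem_stdSimplex_of_vecMul_eq_self hd hdP
  -- `c • d` with `c = min (v / d)` is the largest multiple of `d` below `v`; the rest is a
  -- nonnegative invariant vector vanishing at the minimiser `z`.
  obtain ⟨z, -, hz⟩ := exists_min_image univ (fun x => v x / d x)
    (nonempty_of_sum_ne_zero (by rw [hd.2]; exact one_ne_zero))
  set c := v z / d z
  have hvcd : v = c • d := by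
    refine (sub_eq_zero.1 <| hP.eq_zero_of_vecMul_eq_self (fun x => ?_) ?_ (z := z) ?_)
    · simpa using (le_div_iff₀ (hdpos x)).1 (hz x (mem_univ x))
    · rw [sub_vecMul, smul_vecMul, hvP, hdP]
    · simp [c, div_mul_cancel₀ _ (hdpos z).ne']
  have hc : c = 1 := by simpa [hvcd, ← mul_sum, hd.2] using hv.2
  rw [hvcd, hc, one_smul]

end OrderedField

variable {P : Matrix X X ℝ}

lemma tendsto_cesaroAvg_vecMul_sub (hP : P ∈ rowStochastic ℝ X) {μ : X → ℝ}
    (hμ : μ ∈ stdSimplex ℝ X) :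
    Tendsto (fun t => cesaroAvg μ P t ᵥ* P - cesaroAvg μ P t) atTop (𝓝 0) := by
  simp only [cesaroAvg_vecMul_sub]
  refine (tendsto_inv_atTop_zero.comp tendsto_natCast_atTop_atTop).zero_smul_isBoundedUnder_le
    (isBoundedUnder_of ⟨2, fun t => ?_⟩)
  have h₁ := mem_closedBall_zero_iff.1
    (stdSimplex_subset_closedBall (vecMul_mem_stdSimplex (pow_mem hP t) hμ))
  have h₂ := mem_closedBall_zero_iff.1 (stdSimplex_subset_closedBall hμ)
  exact (norm_sub_le _ _).trans (by linarith)

theorem IsIrreducible.tendsto_cesaroAvg (hirr : P.IsIrreducible) (hP : P ∈ rowStochastic ℝ X)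
    {μ d : X → ℝ} (hμ : μ ∈ stdSimplex ℝ X) (hd : d ∈ stdSimplex ℝ X) (hdP : d ᵥ* P = d) :
    Tendsto (cesaroAvg μ P) atTop (𝓝 d) := by
  refine (isCompact_stdSimplex ℝ X).tendsto_nhds_of_unique_mapClusterPt
    ((eventually_ne_atTop 0).mono fun t ht => cesaroAvg_mem_stdSimplex hP hμ ht) ?_
  intro w hw hcl
  refine hirr.eq_of_mem_stdSimplex_of_vecMul_eq_self hw ?_ hd hdP
  have hdefect : MapClusterPt (w ᵥ* P - w) atTop
      (fun t => cesaroAvg μ P t ᵥ* P - cesaroAvg μ P t) :=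
    hcl.continuousAt_comp (f := fun v => v ᵥ* P - v) (by fun_prop)
  exact sub_eq_zero.1 <| eq_of_nhds_neBot
    (ClusterPt.mono hdefect (tendsto_cesaroAvg_vecMul_sub hP hμ)).neBot

end Matrix

theorem stmt_6_general {X : Type*} [Fintype X] [DecidableEq X] (P : Matrix X X ℝ)
    (hPnonneg : ∀ x y, 0 ≤ P x y) (hProw : ∀ x, ∑ y, P x y = 1)
    (hirr : ∀ x y, ∃ n, 1 ≤ n ∧ 0 < (P ^ n) x y)
    (d : X → ℝ) (hd0 : ∀ x, 0 ≤ d x) (hd1 : ∑ x, d x = 1)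
    (hdstat : ∀ y, ∑ x, d x * P x y = d y)
    (μ : X → ℝ) (hμ0 : ∀ x, 0 ≤ μ x) (hμ1 : ∑ x, μ x = 1) :
    ∀ y, Filter.Tendsto
      (fun t : ℕ => (1 / (t : ℝ)) * ∑ n ∈ Finset.range t, ∑ x, μ x * (P ^ n) x y)
      Filter.atTop (nhds (d y)) := by
  intro y
  have hP : P ∈ Matrix.rowStochastic ℝ X := Matrix.mem_rowStochastic_iff_sum.2 ⟨hPnonneg, hProw⟩
  have hPirr : P.IsIrreducible := (Matrix.isIrreducible_iff_exists_pow_pos hPnonneg).2 hirr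
  have hconv := hPirr.tendsto_cesaroAvg hP (μ := μ) ⟨hμ0, hμ1⟩ ⟨hd0, hd1⟩ (funext hdstat)
  simpa only [Matrix.cesaroAvg_apply] using tendsto_pi_nhds.1 hconv y

/-- Cesàro averages of pushforwards of any initial distribution under an
irreducible row-stochastic matrix converge to the stationary distribution. -/
theorem stmt_6 {X : Type*} [Fintype X] [DecidableEq X] [Nonempty X] (P : Matrix X X ℝ)
    (hPnonneg : ∀ x y, 0 ≤ P x y) (hProw : ∀ x, ∑ y, P x y = 1)
    (hirr : ∀ x y, ∃ n, 1 ≤ n ∧ 0 < (P ^ n) x y)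
    (d : X → ℝ) (hd0 : ∀ x, 0 ≤ d x) (hd1 : ∑ x, d x = 1)
    (hdstat : ∀ y, ∑ x, d x * P x y = d y)
    (μ : X → ℝ) (hμ0 : ∀ x, 0 ≤ μ x) (hμ1 : ∑ x, μ x = 1) :
    ∀ y, Filter.Tendsto
      (fun t : ℕ => (1 / (t : ℝ)) * ∑ n ∈ Finset.range t, ∑ x, μ x * (P ^ n) x y)
      Filter.atTop (nhds (d y)) :=
  stmt_6_general P hPnonneg hProw hirr d hd0 hd1 hdstat μ hμ0 hμ1
end

section
/- Let P be an irreducible row-stochastic matrix on a nonempty finite type X with stationary distribution d, let r : X → ℝ be a reward function, and set g = Σ_x d(x)·r(x). Then the Poisson (average-reward Bellman) equation is solvable: there exists V : X → ℝ such that V(x) + g = r(x) + Σ_y P(x,y)·V(y) for every x ∈ X. -/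
/-!
Solving the Poisson equation means solving `(1 - P) V = r - g • 1`. By the maximum principle,
an irreducible stochastic `P` has only constant harmonic functions, so `1 - P` has rank at
least `|X| - 1`. Its range lies in the hyperplane `d ⬝ᵥ b = 0` because `d` is stationary, and
the hyperplane has dimension `|X| - 1`, so the two coincide. The choice `g = d ⬝ᵥ r` puts
`r - g • 1` in that hyperplane.
-/

open Finset Module

namespace Matrix

variable {n R : Type*} [Fintype n] [DecidableEq n]

lemma pow_mulVec_eq_self [Semiring R] {Q : Matrix n n R} {v : n → R} (hv : Q *ᵥ v = v)
    (k : ℕ) : (Q ^ k) *ᵥ v = v := by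
  induction k with
  | zero => exact one_mulVec v
  | succ k ih => rw [pow_succ, ← mulVec_mulVec, hv, ih]

variable [Field R] [LinearOrder R] [IsStrictOrderedRing R]

lemma apply_eq_of_mulVec_eq_self_of_pos {Q : Matrix n n R} {v : n → R}
    (hQ : Q ∈ rowStochastic R n) (hv : Q *ᵥ v = v) {x y : n} (hmax : ∀ z, v z ≤ v x)
    (hxy : 0 < Q x y) : v y = v x := by
  have hsum : ∑ z, Q x z * (v x - v z) = 0 := by
    have hvx : ∑ z, Q x z * v z = v x := congrFun hv x
    simp only [mul_sub, sum_sub_distrib, ← sum_mul, sum_row_of_mem_rowStochastic hQ, hvx,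
      one_mul, sub_self]
  have hterm := (sum_eq_zero_iff_of_nonneg fun z _ =>
    mul_nonneg (nonneg_of_mem_rowStochastic hQ) (sub_nonneg.2 (hmax z))).1 hsum y (mem_univ y)
  exact (sub_eq_zero.1 ((mul_eq_zero.1 hterm).resolve_left hxy.ne')).symm

theorem IsIrreducible.apply_eq_of_mulVec_eq_self {P : Matrix n n R} (hP : P.IsIrreducible)
    (hPs : P ∈ rowStochastic R n) {v : n → R} (hv : P *ᵥ v = v) (x y : n) : v x = v y := by
  have : Nonempty n := ⟨x⟩
  obtain ⟨x₀, hx₀⟩ := Finite.exists_max v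
  have hconst : ∀ z, v z = v x₀ := fun z => by
    obtain ⟨k, -, hk⟩ := (isIrreducible_iff_exists_pow_pos hP.nonneg).1 hP x₀ z
    exact apply_eq_of_mulVec_eq_self_of_pos (pow_mem hPs k) (pow_mulVec_eq_self hv k) hx₀ hk
  rw [hconst x, hconst y]

theorem IsIrreducible.finrank_ker_one_sub_le_one {P : Matrix n n R} (hP : P.IsIrreducible)
    (hPs : P ∈ rowStochastic R n) : finrank R (LinearMap.ker (1 - P).mulVecLin) ≤ 1 := by
  have hker : LinearMap.ker (1 - P).mulVecLin ≤ R ∙ (1 : n → R) := fun v hv => by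
    have hPv : P *ᵥ v = v := by
      rw [LinearMap.mem_ker, mulVecLin_apply, sub_mulVec, one_mulVec, sub_eq_zero] at hv
      exact hv.symm
    rw [Submodule.mem_span_singleton]
    rcases isEmpty_or_nonempty n with _ | ⟨⟨x₀⟩⟩
    · exact ⟨0, Subsingleton.elim _ _⟩
    · exact ⟨v x₀, funext fun x => by simp [hP.apply_eq_of_mulVec_eq_self hPs hPv x₀ x]⟩
  calc finrank R (LinearMap.ker (1 - P).mulVecLin) ≤ finrank R (R ∙ (1 : n → R)) :=
        Submodule.finrank_mono hker
    _ ≤ 1 := (finrank_span_le_card _).trans (by simp)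

theorem range_mulVecLin_eq_ker_dotProduct {K : Type*} [Field K] {M : Matrix n n K}
    {d : n → K} (hd : d ≠ 0) (hdM : d ᵥ* M = 0)
    (hker : finrank K (LinearMap.ker M.mulVecLin) ≤ 1) :
    LinearMap.range M.mulVecLin = LinearMap.ker (dotProductEquiv K n d) := by
  refine Submodule.eq_of_le_of_finrank_le ?_ ?_
  · rintro _ ⟨v, rfl⟩
    simp [dotProduct_mulVec, hdM]
  · have hdual := Dual.finrank_ker_add_one_of_ne_zero ((dotProductEquiv K n).map_ne_zero_iff.2 hd)
    have hrank := M.mulVecLin.finrank_range_add_finrank_ker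
    rw [finrank_fintype_fun_eq_card] at hdual hrank
    omega

end Matrix

open Matrix in
theorem stmt_10_general {X : Type*} [Fintype X] [DecidableEq X] (P : Matrix X X ℝ)
    (hPnonneg : ∀ x y, 0 ≤ P x y) (hProw : ∀ x, ∑ y, P x y = 1)
    (hirr : ∀ x y, ∃ n, 1 ≤ n ∧ 0 < (P ^ n) x y)
    (d : X → ℝ) (hd1 : ∑ x, d x = 1)
    (hdstat : ∀ y, ∑ x, d x * P x y = d y)
    (r : X → ℝ) (g : ℝ) (hg : g = ∑ x, d x * r x) :
    ∃ V : X → ℝ, ∀ x, V x + g = r x + ∑ y, P x y * V y := by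
  have hPs : P ∈ rowStochastic ℝ X := mem_rowStochastic_iff_sum.2 ⟨hPnonneg, hProw⟩
  have hP : P.IsIrreducible := (isIrreducible_iff_exists_pow_pos hPnonneg).2 hirr
  have hd : d ≠ 0 := fun h => by simp [h] at hd1
  have hdP : d ᵥ* (1 - P) = 0 := by
    rw [vecMul_sub, vecMul_one, show d ᵥ* P = d from funext hdstat, sub_self]
  have hb : d ⬝ᵥ (r - g • 1) = 0 := by
    rw [dotProduct_sub, dotProduct_smul, dotProduct_one, hd1, smul_eq_mul, mul_one, hg,
      sub_eq_zero]
    rfl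
  obtain ⟨V, hV⟩ : r - g • 1 ∈ LinearMap.range (1 - P).mulVecLin := by
    rw [range_mulVecLin_eq_ker_dotProduct hd hdP (hP.finrank_ker_one_sub_le_one hPs)]
    exact hb
  refine ⟨V, fun x => ?_⟩
  have hVx := congrFun hV x
  simp only [mulVecLin_apply, sub_mulVec, one_mulVec, Pi.sub_apply, Pi.smul_apply,
    Pi.one_apply, smul_eq_mul, mul_one] at hVx
  change V x - ∑ y, P x y * V y = r x - g at hVx
  linarith

/-- the Poisson (average-reward Bellman) equation is solvable for an
irreducible row-stochastic matrix with gain `g = ∑ x, d x * r x`. -/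
theorem stmt_10 {X : Type*} [Fintype X] [DecidableEq X] [Nonempty X] (P : Matrix X X ℝ)
    (hPnonneg : ∀ x y, 0 ≤ P x y) (hProw : ∀ x, ∑ y, P x y = 1)
    (hirr : ∀ x y, ∃ n, 1 ≤ n ∧ 0 < (P ^ n) x y)
    (d : X → ℝ) (hd0 : ∀ x, 0 ≤ d x) (hd1 : ∑ x, d x = 1)
    (hdstat : ∀ y, ∑ x, d x * P x y = d y)
    (r : X → ℝ) (g : ℝ) (hg : g = ∑ x, d x * r x) :
    ∃ V : X → ℝ, ∀ x, V x + g = r x + ∑ y, P x y * V y :=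
  stmt_10_general P hPnonneg hProw hirr d hd1 hdstat r g hg
end
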